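/- In the synthetic model C ~ N(0,1), γ(C) = sin(βC), with Gaussian kernel of lengthscale ℓ on C, the population quantity KCI = τ⁴ E[k(C,C')γ(C)γ(C')] evaluates exactly to (τ⁴/2)·e^{−β²}·√(ℓ²/(ℓ²+2))·(e^{2β²/(ℓ²+2)} − 1), which is strictly positive for all ℓ, β, τ > 0, tends to 0 as ℓ → 0⁺, and tends to 0 as ℓ → ∞. -/

import Mathlib

/-!
Reweighting the standard Gaussian density by `exp (-a y²)` gives `(1 + 2a)^{-1/2}` times the
centred Gaussian density of variance `(1 + 2a)⁻¹`, whose complex moment generating function is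
known. Integrating out `C'` and then `C` in this way shows that `E[k(C, C') exp (z C + w C')]` is
`√(ℓ²/(ℓ²+2)) · exp (((ℓ²+1)(z² + w²) + 2zw) / (2(ℓ²+2)))`. Since
`sin (βC) sin (βC') = (cos (βC - βC') - cos (βC + βC')) / 2`, taking real parts at `z = iβ`,
`w = ∓iβ` gives the closed form. As a function of `t = (ℓ² + 2)⁻¹` it is a multiple of
`√(1 - 2t) (exp (2β²t) - 1)`, which vanishes at `t = 1/2` (`ℓ → 0`) and at `t = 0` (`ℓ → ∞`).
-/

open MeasureTheory ProbabilityTheory Filter Topology Real Complex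

lemma exp_neg_mul_sq_mul_gaussianPDFReal {a : ℝ} (ha : 0 < 1 + 2 * a) (y : ℝ) :
    rexp (-a * y ^ 2) * gaussianPDFReal 0 1 y
      = (√(1 + 2 * a))⁻¹ * gaussianPDFReal 0 (1 + 2 * a)⁻¹.toNNReal y := by
  simp only [gaussianPDFReal, Real.coe_toNNReal _ (inv_nonneg.mpr ha.le), NNReal.coe_one,
    sub_zero]
  rw [Real.sqrt_mul' _ (inv_nonneg.mpr ha.le), Real.sqrt_inv, mul_one, mul_left_comm,
    ← Real.exp_add]
  field_simp
  congr 1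
  ring

theorem integral_cexp_neg_mul_sq_add_mul_gaussianReal {a : ℝ} (ha : 0 < 1 + 2 * a) (b : ℂ) :
    ∫ y, cexp (-a * y ^ 2 + b * y) ∂gaussianReal 0 1
      = (√(1 + 2 * a))⁻¹ * cexp (b ^ 2 / (2 * (1 + 2 * a))) := by
  set v := (1 + 2 * a)⁻¹.toNNReal
  have hv : v ≠ 0 := by simpa [v] using ha
  calc ∫ y, cexp (-a * y ^ 2 + b * y) ∂gaussianReal 0 1
      = ∫ y, ((√(1 + 2 * a))⁻¹ : ℂ) * (gaussianPDFReal 0 v y • cexp (b * y)) := by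
        rw [integral_gaussianReal_eq_integral_smul one_ne_zero]
        congr 1 with y
        have h := congrArg (fun r : ℝ ↦ (r : ℂ)) (exp_neg_mul_sq_mul_gaussianPDFReal ha y)
        push_cast at h
        simp only [Complex.real_smul, Complex.exp_add]
        linear_combination cexp (b * y) * h
    _ = (√(1 + 2 * a))⁻¹ * complexMGF id (gaussianReal 0 v) b := by
        rw [integral_const_mul, complexMGF, integral_gaussianReal_eq_integral_smul hv]
        simp
    _ = (√(1 + 2 * a))⁻¹ * cexp (b ^ 2 / (2 * (1 + 2 * a))) := by
        rw [complexMGF_id_gaussianReal, Real.coe_toNNReal _ (inv_nonneg.mpr ha.le)]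
        congr 2
        push_cast
        field_simp
        ring

lemma integrable_cexp_gaussKernel (ℓ : ℝ) (z w : ℂ) :
    Integrable (fun p : ℝ × ℝ ↦ cexp (-(p.1 - p.2) ^ 2 / (2 * ℓ ^ 2) + z * p.1 + w * p.2))
      ((gaussianReal 0 1).prod (gaussianReal 0 1)) := by
  refine ((integrable_exp_mul_gaussianReal z.re).mul_prod
    (integrable_exp_mul_gaussianReal w.re)).mono' (by fun_prop) (ae_of_all _ fun p ↦ ?_)
  have hk : -(p.1 - p.2) ^ 2 / (2 * ℓ ^ 2) ≤ 0 :=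
    div_nonpos_of_nonpos_of_nonneg (neg_nonpos.2 (sq_nonneg _)) (by positivity)
  rw [Complex.norm_exp, ← Real.exp_add]
  gcongr
  norm_cast
  simp only [Complex.add_re, Complex.ofReal_re, Complex.re_mul_ofReal]
  linarith

theorem integral_cexp_gaussKernel_gaussianReal_prod {ℓ : ℝ} (hℓ : ℓ ≠ 0) (z w : ℂ) :
    ∫ p, cexp (-(p.1 - p.2) ^ 2 / (2 * ℓ ^ 2) + z * p.1 + w * p.2)
        ∂((gaussianReal 0 1).prod (gaussianReal 0 1))
      = √(ℓ ^ 2 / (ℓ ^ 2 + 2))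
        * cexp (((ℓ ^ 2 + 1) * (z ^ 2 + w ^ 2) + 2 * z * w) / (2 * (ℓ ^ 2 + 2))) := by
  have hℓc : (ℓ : ℂ) ≠ 0 := by exact_mod_cast hℓ
  have h1 : (ℓ : ℂ) ^ 2 + 1 ≠ 0 := by exact_mod_cast (by positivity : ℓ ^ 2 + 1 ≠ 0)
  have h2 : (ℓ : ℂ) ^ 2 + 2 ≠ 0 := by exact_mod_cast (by positivity : ℓ ^ 2 + 2 ≠ 0)
  set a₁ : ℝ := 1 / (2 * ℓ ^ 2)
  set a₂ : ℝ := 1 / (2 * (ℓ ^ 2 + 1))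
  have ha₁ : 0 < 1 + 2 * a₁ := by positivity
  have ha₂ : 0 < 1 + 2 * a₂ := by positivity
  have he₂ : 1 + 2 * (a₂ : ℂ) = (ℓ ^ 2 + 2) / (ℓ ^ 2 + 1) := by
    simp only [a₂]
    push_cast
    field_simp
    ring
  calc ∫ p, cexp (-(p.1 - p.2) ^ 2 / (2 * ℓ ^ 2) + z * p.1 + w * p.2)
        ∂((gaussianReal 0 1).prod (gaussianReal 0 1))
      = ∫ x, ∫ y, cexp (-(x - y) ^ 2 / (2 * ℓ ^ 2) + z * x + w * y)
          ∂gaussianReal 0 1 ∂gaussianReal 0 1 :=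
        integral_prod _ (integrable_cexp_gaussKernel ℓ z w)
    _ = ∫ x, ((√(1 + 2 * a₁))⁻¹ * cexp (w ^ 2 * ℓ ^ 2 / (2 * (ℓ ^ 2 + 1))))
          * cexp (-a₂ * x ^ 2 + (z + w / (ℓ ^ 2 + 1)) * x) ∂gaussianReal 0 1 := by
        congr 1 with x
        have hsplit : ∀ y : ℝ, cexp (-(x - y) ^ 2 / (2 * ℓ ^ 2) + z * x + w * y)
            = cexp (-x ^ 2 / (2 * ℓ ^ 2) + z * x)
              * cexp (-a₁ * y ^ 2 + (x / ℓ ^ 2 + w) * y) := by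
          intro y
          rw [← Complex.exp_add]
          congr 1
          simp only [a₁]
          push_cast
          field_simp
          ring
        simp_rw [hsplit]
        rw [integral_const_mul, integral_cexp_neg_mul_sq_add_mul_gaussianReal ha₁,
          mul_left_comm, mul_assoc, ← Complex.exp_add, ← Complex.exp_add]
        congr 2
        simp only [a₁, a₂]
        push_cast
        field_simp
        ring
    _ = √(ℓ ^ 2 / (ℓ ^ 2 + 2))
        * cexp (((ℓ ^ 2 + 1) * (z ^ 2 + w ^ 2) + 2 * z * w) / (2 * (ℓ ^ 2 + 2))) := by
        rw [integral_const_mul, integral_cexp_neg_mul_sq_add_mul_gaussianReal ha₂,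
          mul_mul_mul_comm, ← Complex.exp_add]
        have hsqrt : (√(1 + 2 * a₁))⁻¹ * (√(1 + 2 * a₂))⁻¹ = √(ℓ ^ 2 / (ℓ ^ 2 + 2)) := by
          rw [← mul_inv, ← Real.sqrt_mul ha₁.le, ← Real.sqrt_inv]
          congr 1
          simp only [a₁, a₂]
          field_simp
          ring
        congr 1
        · exact_mod_cast hsqrt
        · rw [he₂]
          congr 1
          field_simp
          ring

lemma gaussKernel_mul_cos_eq_re (ℓ u v x y : ℝ) :
    rexp (-(x - y) ^ 2 / (2 * ℓ ^ 2)) * Real.cos (u * x + v * y)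
      = (cexp (-(x - y) ^ 2 / (2 * ℓ ^ 2) + I * u * x + I * v * y)).re := by
  have harg : (-(x - y) ^ 2 / (2 * ℓ ^ 2) : ℂ) + I * u * x + I * v * y
      = ((-(x - y) ^ 2 / (2 * ℓ ^ 2) : ℝ) : ℂ) + ((u * x + v * y : ℝ) : ℂ) * I := by
    push_cast
    ring
  simp only [harg, Complex.exp_re, Complex.add_re, Complex.add_im, Complex.ofReal_re,
    Complex.ofReal_im, Complex.mul_I_re, Complex.mul_I_im, neg_zero, add_zero, zero_add]

lemma integrable_gaussKernel_mul_cos (ℓ u v : ℝ) :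
    Integrable
      (fun p : ℝ × ℝ ↦ rexp (-(p.1 - p.2) ^ 2 / (2 * ℓ ^ 2)) * Real.cos (u * p.1 + v * p.2))
      ((gaussianReal 0 1).prod (gaussianReal 0 1)) := by
  simpa only [gaussKernel_mul_cos_eq_re, RCLike.re_to_complex]
    using (integrable_cexp_gaussKernel ℓ (I * u) (I * v)).re

theorem integral_gaussKernel_mul_cos_gaussianReal_prod {ℓ : ℝ} (hℓ : ℓ ≠ 0) (u v : ℝ) :
    ∫ p, rexp (-(p.1 - p.2) ^ 2 / (2 * ℓ ^ 2)) * Real.cos (u * p.1 + v * p.2)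
        ∂((gaussianReal 0 1).prod (gaussianReal 0 1))
      = √(ℓ ^ 2 / (ℓ ^ 2 + 2))
        * rexp (-((ℓ ^ 2 + 1) * (u ^ 2 + v ^ 2) + 2 * u * v) / (2 * (ℓ ^ 2 + 2))) := by
  simp_rw [gaussKernel_mul_cos_eq_re, ← RCLike.re_to_complex]
  rw [integral_re (integrable_cexp_gaussKernel ℓ _ _), RCLike.re_to_complex,
    integral_cexp_gaussKernel_gaussianReal_prod hℓ]
  have hq : ((ℓ ^ 2 + 1) * ((I * u) ^ 2 + (I * v) ^ 2) + 2 * (I * u) * (I * v))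
        / (2 * (ℓ ^ 2 + 2))
      = ((-((ℓ ^ 2 + 1) * (u ^ 2 + v ^ 2) + 2 * u * v) / (2 * (ℓ ^ 2 + 2)) : ℝ) : ℂ) := by
    push_cast
    linear_combination ((ℓ ^ 2 + 1) * (u ^ 2 + v ^ 2) + 2 * u * v) / (2 * (ℓ ^ 2 + 2)) * I_sq
  rw [hq, ← Complex.ofReal_exp, ← Complex.ofReal_mul, Complex.ofReal_re]

theorem integral_gaussKernel_mul_sin_mul_sin_gaussianReal_prod {ℓ : ℝ} (hℓ : ℓ ≠ 0) (β : ℝ) :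
    ∫ p, rexp (-(p.1 - p.2) ^ 2 / (2 * ℓ ^ 2)) * (Real.sin (β * p.1) * Real.sin (β * p.2))
        ∂((gaussianReal 0 1).prod (gaussianReal 0 1))
      = √(ℓ ^ 2 / (ℓ ^ 2 + 2))
        * (rexp (-(β ^ 2 * ℓ ^ 2 / (ℓ ^ 2 + 2))) - rexp (-β ^ 2)) / 2 := by
  have hsin : ∀ x y : ℝ, Real.sin (β * x) * Real.sin (β * y)
      = (Real.cos (β * x + -β * y) - Real.cos (β * x + β * y)) / 2 := by
    intro x y
    rw [neg_mul, ← sub_eq_add_neg, Real.cos_sub, Real.cos_add]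
    ring
  simp_rw [hsin, mul_div_assoc', mul_sub]
  rw [integral_div, integral_sub (integrable_gaussKernel_mul_cos ℓ _ _)
    (integrable_gaussKernel_mul_cos ℓ _ _), integral_gaussKernel_mul_cos_gaussianReal_prod hℓ,
    integral_gaussKernel_mul_cos_gaussianReal_prod hℓ]
  congr 4
  · field_simp
    ring
  · field_simp
    ring

noncomputable def kciProfile (c b ℓ : ℝ) : ℝ :=
  c * √(ℓ ^ 2 / (ℓ ^ 2 + 2)) * (rexp (b / (ℓ ^ 2 + 2)) - 1)

lemma kciProfile_pos {c b ℓ : ℝ} (hc : 0 < c) (hb : 0 < b) (hℓ : ℓ ≠ 0) :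
    0 < kciProfile c b ℓ := by
  have hexp : 0 < rexp (b / (ℓ ^ 2 + 2)) - 1 :=
    sub_pos.2 (Real.one_lt_exp_iff.2 (by positivity))
  unfold kciProfile
  positivity

lemma continuous_kciProfile (c b : ℝ) : Continuous (kciProfile c b) := by
  unfold kciProfile
  fun_prop (disch := intro; positivity)

lemma tendsto_kciProfile_nhdsGT_zero (c b : ℝ) : Tendsto (kciProfile c b) (𝓝[>] 0) (𝓝 0) := by
  have h : ContinuousWithinAt (kciProfile c b) (Set.Ioi 0) 0 :=
    (continuous_kciProfile c b).continuousWithinAt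
  simpa [ContinuousWithinAt, kciProfile] using h

lemma tendsto_kciProfile_atTop (c b : ℝ) : Tendsto (kciProfile c b) atTop (𝓝 0) := by
  have hinv : Tendsto (fun ℓ : ℝ ↦ (ℓ ^ 2 + 2)⁻¹) atTop (𝓝 0) :=
    tendsto_inv_atTop_zero.comp
      (tendsto_atTop_add_const_right _ 2 (tendsto_pow_atTop two_ne_zero))
  have hG : Continuous fun t : ℝ ↦ c * √(1 - 2 * t) * (rexp (b * t) - 1) := by fun_prop
  have h := (hG.tendsto 0).comp hinv
  simp only [Function.comp_def, mul_zero, sub_zero, Real.sqrt_one, Real.exp_zero, sub_self] at h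
  convert h using 2 with ℓ
  rw [kciProfile, div_eq_mul_inv b]
  congr 3
  field_simp
  ring

/-- **Closed form of the population KCI in the synthetic model.**
With `C, C'` i.i.d. `N(0,1)`, `γ(c) = sin(βc)`, a Gaussian kernel of lengthscale `ℓ` on `C`
and noise scale `τ`, the population quantity `KCI = τ⁴ E[k(C,C')γ(C)γ(C')]` evaluates to
`(τ⁴/2)·e^{−β²}·√(ℓ²/(ℓ²+2))·(e^{2β²/(ℓ²+2)} − 1)`, which is strictly positive for all
`ℓ, β, τ > 0`, tends to `0` as `ℓ → 0⁺`, and tends to `0` as `ℓ → ∞`. -/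
theorem kci_closed_form_synthetic
    (τ β : ℝ) (hτ : 0 < τ) (hβ : 0 < β)
    (F : ℝ → ℝ)
    (hF : F = fun ℓ => (τ ^ 4 / 2) * Real.exp (-(β ^ 2)) * Real.sqrt (ℓ ^ 2 / (ℓ ^ 2 + 2))
        * (Real.exp (2 * β ^ 2 / (ℓ ^ 2 + 2)) - 1)) :
    (∀ ℓ : ℝ, 0 < ℓ →
        τ ^ 4 * ∫ p, Real.exp (-(p.1 - p.2) ^ 2 / (2 * ℓ ^ 2))
              * (Real.sin (β * p.1) * Real.sin (β * p.2))
            ∂((gaussianReal 0 1).prod (gaussianReal 0 1))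
          = F ℓ)
    ∧ (∀ ℓ : ℝ, 0 < ℓ → 0 < F ℓ)
    ∧ Tendsto F (nhdsWithin 0 (Set.Ioi 0)) (nhds 0)
    ∧ Tendsto F atTop (nhds 0) := by
  replace hF : F = kciProfile (τ ^ 4 / 2 * rexp (-β ^ 2)) (2 * β ^ 2) := hF
  subst hF
  refine ⟨fun ℓ hℓ ↦ ?_, fun ℓ hℓ ↦ kciProfile_pos (by positivity) (by positivity) hℓ.ne',
    tendsto_kciProfile_nhdsGT_zero _ _, tendsto_kciProfile_atTop _ _⟩
  have hsplit : rexp (-(β ^ 2 * ℓ ^ 2 / (ℓ ^ 2 + 2)))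
      = rexp (-β ^ 2) * rexp (2 * β ^ 2 / (ℓ ^ 2 + 2)) := by
    rw [← Real.exp_add]
    congr 1
    field_simp
    ring
  rw [integral_gaussKernel_mul_sin_mul_sin_gaussianReal_prod hℓ.ne', hsplit, kciProfile]
  ring
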